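/- Let u : ℝ → ℝ^d be continuously differentiable. Then for Lebesgue-almost every t ∈ [0,1], the function s ↦ m(u(s)) is differentiable at t, and its derivative at t equals ⟨∇p_i(u(t)), u′(t)⟩ for every index i that is active at u(t) (in particular, all active indices give the same value). -/

import Mathlib

/-!
Each `p i ∘ u` is `C¹`, hence locally Lipschitz, and a finite minimum of locally Lipschitz
functions is locally Lipschitz, so by Rademacher's theorem the margin along the curve is
differentiable almost everywhere. At such a point the margin touches every active `p i ∘ u` from
below, so their difference has a local minimum there and the two derivatives coincide.
-/

open Set MeasureTheory Filter Metric Topology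
open scoped RealInnerProductSpace

theorem LocallyLipschitz.ae_differentiableAt {E F : Type*} [NormedAddCommGroup E]
    [NormedSpace ℝ E] [FiniteDimensional ℝ E] [MeasurableSpace E] [BorelSpace E]
    [NormedAddCommGroup F] [NormedSpace ℝ F] [FiniteDimensional ℝ F]
    {μ : Measure E} [μ.IsAddHaarMeasure] {f : E → F} (hf : LocallyLipschitz f) :
    ∀ᵐ x ∂μ, DifferentiableAt ℝ f x := by
  have hball (k : ℕ) : ∀ᵐ x ∂μ, x ∈ closedBall (0 : E) k →
      DifferentiableWithinAt ℝ f (closedBall 0 k) x := by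
    obtain ⟨K, hK⟩ := hf.locallyLipschitzOn.exists_lipschitzOnWith_of_compact
      (isCompact_closedBall (0 : E) k)
    exact hK.ae_differentiableWithinAt_of_mem
  filter_upwards [ae_all_iff.2 hball] with x hx
  obtain ⟨k, hk⟩ := exists_nat_gt ‖x‖
  exact (hx k (mem_closedBall_zero_iff.2 hk.le)).differentiableAt
    (closedBall_mem_nhds_of_mem (mem_ball_zero_iff.2 hk))

theorem LocallyLipschitz.iInf {α ι : Type*} [PseudoEMetricSpace α] [Finite ι] [Nonempty ι]
    {f : ι → α → ℝ} (hf : ∀ i, LocallyLipschitz (f i)) :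
    LocallyLipschitz fun x => ⨅ i, f i x := by
  have := Fintype.ofFinite ι
  have hinf : (fun x => ⨅ i, f i x) = Finset.univ.inf' Finset.univ_nonempty f := by
    ext x
    rw [Finset.inf'_apply, Finset.inf'_univ_eq_ciInf]
  rw [hinf]
  exact Finset.inf'_induction _ _ (fun g hg h hh => hg.min hh) fun i _ => hf i

theorem HasDerivAt.eq_of_eventuallyLE_of_eq {f g : ℝ → ℝ} {f' g' x : ℝ}
    (hf : HasDerivAt f f' x) (hg : HasDerivAt g g' x) (hle : g ≤ᶠ[𝓝 x] f) (heq : g x = f x) :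
    g' = f' := by
  have hmin : IsLocalMin (f - g) x := by
    filter_upwards [hle] with y hy
    simp only [Pi.sub_apply, heq, sub_self, sub_nonneg, hy]
  linarith [hmin.hasDerivAt_eq_zero (hf.sub hg)]

theorem HasGradientAt.comp_hasDerivAt {F : Type*} [NormedAddCommGroup F] [InnerProductSpace ℝ F]
    [CompleteSpace F] {p : F → ℝ} {u : ℝ → F} {g v : F} {t : ℝ}
    (hp : HasGradientAt p g (u t)) (hu : HasDerivAt u v t) :
    HasDerivAt (p ∘ u) ⟪g, v⟫ t :=
  (hasGradientAt_iff_hasFDerivAt.1 hp).comp_hasDerivAt t hu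

theorem stmt_17_general {d n : ℕ} (hn : 0 < n)
    (p : Fin n → EuclideanSpace ℝ (Fin d) → ℝ)
    (hp : ∀ i, ContDiff ℝ 1 (p i))
    (u : ℝ → EuclideanSpace ℝ (Fin d)) (hu : ContDiff ℝ 1 u) :
    ∀ᵐ t ∂(MeasureTheory.volume.restrict (Set.Icc (0 : ℝ) 1)),
      DifferentiableAt ℝ (fun s => ⨅ j, p j (u s)) t ∧
        ∀ i, p i (u t) = (⨅ j, p j (u t)) →
          deriv (fun s => ⨅ j, p j (u s)) t = ⟪gradient (p i) (u t), deriv u t⟫ := by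
  have : Nonempty (Fin n) := ⟨⟨0, hn⟩⟩
  have hmargin : LocallyLipschitz fun s => ⨅ j, p j (u s) :=
    .iInf fun j => ((hp j).comp hu).locallyLipschitz
  filter_upwards [ae_restrict_of_ae hmargin.ae_differentiableAt] with t ht
  refine ⟨ht, fun i hi => ?_⟩
  have hpi : HasDerivAt (p i ∘ u) ⟪gradient (p i) (u t), deriv u t⟫ t :=
    ((hp i).differentiable one_ne_zero _).hasGradientAt.comp_hasDerivAt
      (hu.differentiable one_ne_zero t).hasDerivAt
  exact hpi.eq_of_eventuallyLE_of_eq ht.hasDerivAt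
    (.of_forall fun s => ciInf_le (finite_range _).bddBelow i) hi.symm

/-- Chain rule for the margin along a continuously differentiable curve: almost
everywhere, the margin is differentiable and its derivative is given by any
active gradient. -/
theorem stmt_17 {d n : ℕ} (hd : 0 < d) (hn : 0 < n)
    (p : Fin n → EuclideanSpace ℝ (Fin d) → ℝ)
    (hp : ∀ i, ContDiff ℝ 1 (p i))
    (u : ℝ → EuclideanSpace ℝ (Fin d)) (hu : ContDiff ℝ 1 u) :
    ∀ᵐ t ∂(MeasureTheory.volume.restrict (Set.Icc (0 : ℝ) 1)),
      DifferentiableAt ℝ (fun s => ⨅ j, p j (u s)) t ∧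
        ∀ i, p i (u t) = (⨅ j, p j (u t)) →
          deriv (fun s => ⨅ j, p j (u s)) t = ⟪gradient (p i) (u t), deriv u t⟫ :=
  stmt_17_general hn p hp u hu
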